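/- arXiv:2001.10933 — 2 statements merged into one kernel-verified Lean document; each statement's English description precedes it below -/
import Mathlib

section
/- Define ȳ on [-1,1] by ȳ(x) = -(1/2)(x+1) + (1/2)(x+1)³ + (1/12)(1-x²)³ for -1 ≤ x ≤ 0 and ȳ(x) = -(1/2)(x-1) + (1/2)(x-1)³ + (1/12)(1-x²)³ for 0 ≤ x ≤ 1. Then ȳ ∈ C¹([-1,1]), ȳ(-1) = ȳ(1) = 0, ȳ'(x) ≤ 1 for all x ∈ [-1,1], and the set {x ∈ [-1,1] : ȳ'(x) = 1} = {0}. -/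
/-!
The two branches of `ȳ` agree at `0` together with their derivatives (`ȳ'(0) = 1` from both
sides), so the glued function is differentiable with the glued derivative, which is continuous.
On both branches `1 - ȳ'(x) = (3/2)|x|(2 - |x|) + (1/2) x (1 - x²)²`; for `|x| ≤ 1` the first
term is at least `(3/2)|x|` and the second at least `-(1/2)|x|`, so `1 - ȳ'(x) ≥ |x|`. This gives
`ȳ' ≤ 1` with equality only at `0`.
-/

open Set

/-- The exact optimal state of Example 2.5 (Dirichlet case). -/
noncomputable def ybarD (x : ℝ) : ℝ :=
  if x ≤ 0 then -(1/2)*(x+1) + (1/2)*(x+1)^3 + (1/12)*(1-x^2)^3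
  else -(1/2)*(x-1) + (1/2)*(x-1)^3 + (1/12)*(1-x^2)^3

/-- Its derivative. -/
noncomputable def ybarD' (x : ℝ) : ℝ :=
  if x ≤ 0 then -(1/2) + (3/2)*(x+1)^2 - (1/2)*x*(1-x^2)^2
  else -(1/2) + (3/2)*(x-1)^2 - (1/2)*x*(1-x^2)^2

theorem hasDerivAt_ite_le {F : Type*} [NormedAddCommGroup F] [NormedSpace ℝ F]
    {f g f' g' : ℝ → F} {a : ℝ}
    (hf : ∀ x ≤ a, HasDerivAt f (f' x) x) (hg : ∀ x ≥ a, HasDerivAt g (g' x) x)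
    (ha : f a = g a) (ha' : f' a = g' a) (x : ℝ) :
    HasDerivAt (fun y => if y ≤ a then f y else g y) (if x ≤ a then f' x else g' x) x := by
  rcases lt_trichotomy x a with hx | rfl | hx
  · rw [if_pos hx.le]
    refine (hf x hx.le).congr_of_eventuallyEq ?_
    filter_upwards [Iio_mem_nhds hx] with y hy
    exact if_pos (mem_Iio.1 hy).le
  · rw [if_pos le_rfl]
    have hleft : HasDerivWithinAt (fun y => if y ≤ x then f y else g y) (f' x) (Iic x) x :=
      (hf x le_rfl).hasDerivWithinAt.congr (fun y hy => if_pos hy) (if_pos le_rfl)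
    have hright : HasDerivWithinAt (fun y => if y ≤ x then f y else g y) (f' x) (Ici x) x := by
      refine ha' ▸ (hg x le_rfl).hasDerivWithinAt.congr (fun y hy => ?_) (by simp [ha])
      rcases (mem_Ici.1 hy).eq_or_lt with rfl | hlt
      · simp [ha]
      · exact if_neg hlt.not_ge
    simpa [Iic_union_Ici] using hleft.union hright
  · rw [if_neg hx.not_ge]
    refine (hg x hx.le).congr_of_eventuallyEq ?_
    filter_upwards [Ioi_mem_nhds hx] with y hy
    exact if_neg (not_le.2 hy)

theorem hasDerivAt_ybarD_branch (c x : ℝ) :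
    HasDerivAt (fun x : ℝ => -(1/2)*(x+c) + (1/2)*(x+c)^3 + (1/12)*(1-x^2)^3)
      (-(1/2) + (3/2)*(x+c)^2 - (1/2)*x*(1-x^2)^2) x := by
  have hlin : HasDerivAt (fun x : ℝ => x + c) 1 x := (hasDerivAt_id x).add_const c
  have hquad : HasDerivAt (fun x : ℝ => 1 - x^2) (-(2*x)) x := by
    simpa using (hasDerivAt_pow 2 x).const_sub 1
  refine (((hlin.const_mul (-(1/2))).add ((hlin.pow 3).const_mul (1/2))).add
    ((hquad.pow 3).const_mul (1/12))).congr_deriv ?_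
  norm_num
  ring

theorem continuous_ybarD' : Continuous ybarD' :=
  Continuous.if_le (by fun_prop) (by fun_prop) continuous_id continuous_const
    (fun x hx => by subst hx; norm_num)

theorem one_sub_ybarD'_eq (x : ℝ) :
    1 - ybarD' x = 3/2 * |x| * (2 - |x|) + 1/2 * x * (1 - x^2)^2 := by
  unfold ybarD'
  split_ifs with hx
  · rw [abs_of_nonpos hx]; ring
  · rw [abs_of_pos (not_le.1 hx)]; ring

theorem abs_le_one_sub_ybarD' {x : ℝ} (hx : |x| ≤ 1) : |x| ≤ 1 - ybarD' x := by
  have hsq : (1 - x^2)^2 ≤ 1 := by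
    have : x^2 ≤ 1 := by simpa using sq_le_sq' (abs_le.1 hx).1 (abs_le.1 hx).2
    nlinarith [sq_nonneg x]
  have hcubic : -|x| ≤ x * (1 - x^2)^2 := by
    nlinarith [mul_le_mul_of_nonneg_left hsq (abs_nonneg x),
      mul_le_mul_of_nonneg_right (neg_abs_le x) (sq_nonneg (1 - x^2))]
  rw [one_sub_ybarD'_eq]
  nlinarith [abs_nonneg x]

/-- Example 2.5: `ȳ ∈ C¹([-1,1])`, `ȳ(-1) = ȳ(1) = 0`, `ȳ' ≤ 1` on `[-1,1]`,
and the active set `{x ∈ [-1,1] : ȳ'(x) = 1}` is exactly `{0}`. -/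
theorem example_dirichlet_exact_solution :
    (∀ x ∈ Set.Icc (-1:ℝ) 1, HasDerivAt ybarD (ybarD' x) x) ∧
    ContinuousOn ybarD' (Set.Icc (-1:ℝ) 1) ∧
    ybarD (-1) = 0 ∧ ybarD 1 = 0 ∧
    (∀ x ∈ Set.Icc (-1:ℝ) 1, ybarD' x ≤ 1) ∧
    {x ∈ Set.Icc (-1:ℝ) 1 | ybarD' x = 1} = {0} := by
  have habs : ∀ x ∈ Icc (-1:ℝ) 1, |x| ≤ 1 - ybarD' x :=
    fun x hx => abs_le_one_sub_ybarD' (abs_le.2 hx)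
  refine ⟨fun x _ => ?_, continuous_ybarD'.continuousOn, by norm_num [ybarD],
    by norm_num [ybarD], fun x hx => by linarith [habs x hx, abs_nonneg x], ?_⟩
  · exact hasDerivAt_ite_le (a := 0) (fun x _ => hasDerivAt_ybarD_branch 1 x)
      (fun x _ => by simpa only [← sub_eq_add_neg] using hasDerivAt_ybarD_branch (-1) x)
      (by norm_num) (by norm_num) x
  · ext x
    refine ⟨fun ⟨hx, h1⟩ => abs_nonpos_iff.1 (by linarith [habs x hx]), ?_⟩
    rintro rfl
    exact ⟨by norm_num, by norm_num [ybarD']⟩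
end

section
/- Let I = (-1,1), V = {v ∈ H²(I) : v(-1)=v'(1)=0}, β > 0, f ∈ H¹(I), y_d ∈ L²(I), ρ ∈ L²(I), γ ∈ ℝ, and suppose ȳ ∈ V satisfies ∫_I (ȳ - y_d) z dx + β∫_I (ȳ'' + f) z'' dx + β∫_I z' ρ dx + βγ z'(-1) = 0 for all z ∈ V. If p ∈ H²(I) satisfies ∫_I ȳ'' z'' dx = ∫_I p' z'' dx for all z ∈ V, then ȳ'' = p' a.e., and hence ȳ ∈ H³(I). -/
open MeasureTheory Set

/-- Final identification step in the proof of Theorem 2.6 (mixed boundary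
conditions): if `ȳ ∈ V = {v ∈ H²(-1,1) : v(-1) = v'(1) = 0}` satisfies the KKT
equation and `p ∈ H²(-1,1)` satisfies `∫ ȳ'' z'' = ∫ p' z''` for all `z ∈ V`,
then `ȳ'' = p'` a.e.; hence `ȳ ∈ H³(-1,1)` (its second derivative agrees a.e.
with the `H¹` function `p'`, whose derivative is `p''`). -/
theorem mixed_state_H3_regularity
    (β γ : ℝ) (hβ : 0 < β)
    (f yd ρ yb yb' yb'' p p' p'' : ℝ → ℝ)
    (hybbc : yb (-1) = 0 ∧ yb' 1 = 0)
    (hyb' : ∀ x ∈ Set.Icc (-1:ℝ) 1, HasDerivWithinAt yb (yb' x) (Set.Icc (-1:ℝ) 1) x)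
    (hyb'' : ∀ x ∈ Set.Icc (-1:ℝ) 1, HasDerivWithinAt yb' (yb'' x) (Set.Icc (-1:ℝ) 1) x)
    (hyb''L2 : MemLp yb'' 2 (volume.restrict (Set.Ioo (-1:ℝ) 1)))
    (hp' : ∀ x ∈ Set.Icc (-1:ℝ) 1, HasDerivWithinAt p (p' x) (Set.Icc (-1:ℝ) 1) x)
    (hp'' : ∀ x ∈ Set.Icc (-1:ℝ) 1, HasDerivWithinAt p' (p'' x) (Set.Icc (-1:ℝ) 1) x)
    (hp''L2 : MemLp p'' 2 (volume.restrict (Set.Ioo (-1:ℝ) 1)))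
    (hKKT : ∀ z z' z'' : ℝ → ℝ,
      z (-1) = 0 → z' 1 = 0 →
      (∀ x ∈ Set.Icc (-1:ℝ) 1, HasDerivWithinAt z (z' x) (Set.Icc (-1:ℝ) 1) x) →
      (∀ x ∈ Set.Icc (-1:ℝ) 1, HasDerivWithinAt z' (z'' x) (Set.Icc (-1:ℝ) 1) x) →
      ContinuousOn z'' (Set.Icc (-1:ℝ) 1) →
      (∫ x in Set.Ioo (-1:ℝ) 1, (yb x - yd x) * z x) +
        β * (∫ x in Set.Ioo (-1:ℝ) 1, (yb'' x + f x) * z'' x) +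
        β * (∫ x in Set.Ioo (-1:ℝ) 1, z' x * ρ x) + β * γ * z' (-1) = 0)
    (hpair : ∀ z z' z'' : ℝ → ℝ,
      z (-1) = 0 → z' 1 = 0 →
      (∀ x ∈ Set.Icc (-1:ℝ) 1, HasDerivWithinAt z (z' x) (Set.Icc (-1:ℝ) 1) x) →
      (∀ x ∈ Set.Icc (-1:ℝ) 1, HasDerivWithinAt z' (z'' x) (Set.Icc (-1:ℝ) 1) x) →
      ContinuousOn z'' (Set.Icc (-1:ℝ) 1) →
      (∫ x in Set.Ioo (-1:ℝ) 1, yb'' x * z'' x) =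
        ∫ x in Set.Ioo (-1:ℝ) 1, p' x * z'' x) :
    (∀ᵐ x ∂(volume.restrict (Set.Ioo (-1:ℝ) 1)), yb'' x = p' x) ∧
      ∃ w : ℝ → ℝ,
        (∀ᵐ x ∂(volume.restrict (Set.Ioo (-1:ℝ) 1)), yb'' x = w x) ∧
        ∀ x ∈ Set.Icc (-1:ℝ) 1, HasDerivWithinAt w (p'' x) (Set.Icc (-1:ℝ) 1) x := by
  haveI : IsFiniteMeasure (volume.restrict (Set.Ioo (-1:ℝ) 1)) := by
    constructor
    rw [Measure.restrict_apply_univ, Real.volume_Ioo]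
    exact ENNReal.ofReal_lt_top
  -- integrability facts
  have hyb''int : IntegrableOn yb'' (Set.Ioo (-1:ℝ) 1) volume :=
    hyb''L2.integrable one_le_two
  have hp'cont : ContinuousOn p' (Set.Icc (-1:ℝ) 1) := fun x hx =>
    (hp'' x hx).continuousWithinAt
  have hp'int : IntegrableOn p' (Set.Ioo (-1:ℝ) 1) volume :=
    (hp'cont.integrableOn_compact isCompact_Icc).mono_set Set.Ioo_subset_Icc_self
  set F : ℝ → ℝ := fun x => yb'' x - p' x with hF
  have hFint : IntegrableOn F (Set.Ioo (-1:ℝ) 1) volume := hyb''int.sub hp'int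
  have key : ∀ᵐ x ∂volume, x ∈ Set.Ioo (-1:ℝ) 1 → F x = 0 := by
    apply isOpen_Ioo.ae_eq_zero_of_integral_contDiff_smul_eq_zero
      hFint.locallyIntegrableOn
    intro g hg hgsupp hgsub
    have hgc : Continuous g := hg.continuous
    -- construct the test function z with z'' = g
    set z' : ℝ → ℝ := fun x => ∫ t in (1:ℝ)..x, g t with hz'def
    set z : ℝ → ℝ := fun x => ∫ t in (-1:ℝ)..x, z' t with hzdef
    have hz'deriv : ∀ x : ℝ, HasDerivAt z' (g x) x := fun x =>
      (hgc.integral_hasStrictDerivAt 1 x).hasDerivAt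
    have hz'cont : Continuous z' :=
      continuous_iff_continuousAt.2 fun x => (hz'deriv x).continuousAt
    have hzderiv : ∀ x : ℝ, HasDerivAt z (z' x) x := fun x =>
      (hz'cont.integral_hasStrictDerivAt (-1) x).hasDerivAt
    have hz0 : z (-1) = 0 := by simp [hzdef]
    have hz'0 : z' 1 = 0 := by simp [hz'def]
    have hpg := hpair z z' g hz0 hz'0
      (fun x _ => (hzderiv x).hasDerivWithinAt)
      (fun x _ => (hz'deriv x).hasDerivWithinAt)
      hgc.continuousOn
    -- the integral over ℝ equals the integral over the interval
    have hsupp : ∀ x ∉ Set.Ioo (-1:ℝ) 1, g x • F x = 0 := by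
      intro x hx
      have : g x = 0 := by
        by_contra h
        exact hx (hgsub (subset_tsupport g (by simpa [Function.mem_support] using h)))
      simp [this]
    have hrw : (∫ x, g x • F x ∂volume) = ∫ x in Set.Ioo (-1:ℝ) 1, g x • F x := by
      rw [← MeasureTheory.integral_indicator measurableSet_Ioo]
      congr 1
      ext x
      by_cases hx : x ∈ Set.Ioo (-1:ℝ) 1
      · simp [Set.indicator_of_mem hx]
      · rw [Set.indicator_of_notMem hx, hsupp x hx]
    rw [hrw]
    have hgbd : ∃ C, ∀ x, ‖g x‖ ≤ C := hgsupp.exists_bound_of_continuous hgc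
    have hi1 : Integrable (fun x => g x * yb'' x) (volume.restrict (Set.Ioo (-1:ℝ) 1)) :=
      hyb''int.bdd_mul hgc.aestronglyMeasurable (ae_of_all _ hgbd.choose_spec)
    have hi2 : Integrable (fun x => g x * p' x) (volume.restrict (Set.Ioo (-1:ℝ) 1)) :=
      hp'int.bdd_mul hgc.aestronglyMeasurable (ae_of_all _ hgbd.choose_spec)
    have : (∫ x in Set.Ioo (-1:ℝ) 1, g x • F x)
        = (∫ x in Set.Ioo (-1:ℝ) 1, g x * yb'' x) - ∫ x in Set.Ioo (-1:ℝ) 1, g x * p' x := by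
      rw [← MeasureTheory.integral_sub hi1 hi2]
      congr 1; ext x; simp [hF, smul_eq_mul, mul_sub]
    rw [this, sub_eq_zero]
    calc (∫ x in Set.Ioo (-1:ℝ) 1, g x * yb'' x)
        = ∫ x in Set.Ioo (-1:ℝ) 1, yb'' x * g x := by simp_rw [mul_comm]
      _ = ∫ x in Set.Ioo (-1:ℝ) 1, p' x * g x := hpg
      _ = ∫ x in Set.Ioo (-1:ℝ) 1, g x * p' x := by simp_rw [mul_comm]
  have main : ∀ᵐ x ∂(volume.restrict (Set.Ioo (-1:ℝ) 1)), yb'' x = p' x := by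
    have h1 : ∀ᵐ x ∂(volume.restrict (Set.Ioo (-1:ℝ) 1)),
        x ∈ Set.Ioo (-1:ℝ) 1 → F x = 0 := ae_restrict_of_ae key
    have h2 : ∀ᵐ x ∂(volume.restrict (Set.Ioo (-1:ℝ) 1)), x ∈ Set.Ioo (-1:ℝ) 1 :=
      ae_restrict_mem measurableSet_Ioo
    filter_upwards [h1, h2] with x hx hmem
    have := hx hmem
    simpa [hF, sub_eq_zero] using this
  refine ⟨main, p', main, fun x hx => hp'' x hx⟩
end
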